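/- arXiv:2003.12872 — 3 statements merged into one kernel-verified Lean document; each statement's English description precedes it below -/
import Mathlib

section
/- For 0 ≤ m ≤ n integers, Σ_{i=1}^m Σ_{j=1}^n min(i,j)/(i j) = 2m - (m+1) H_m + m H_n, where H_k denotes the k-th harmonic number. -/
open Finset

/-- The `k`-th harmonicR number `H_k = ∑_{j=1}^k 1/j`. -/
noncomputable def harmonicR (k : ℕ) : ℝ := ∑ j ∈ Finset.Icc 1 k, (1 : ℝ) / j

/-! Since `min i j / (i j) = 1 / max i j`, row `i ≤ n` of the double sum is
`i · (1/i) + ∑_{i < j ≤ n} 1/j = 1 + H_n - H_i`. Summing over `i ≤ m` leaves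
`m + m H_n - ∑_{i ≤ m} H_i`, and `∑_{i ≤ m} H_i = (m + 1) H_m - m`. -/

lemma harmonicR_succ (k : ℕ) : harmonicR (k + 1) = harmonicR k + 1 / (k + 1) := by
  rw [harmonicR, harmonicR, sum_Icc_succ_top (by omega)]
  push_cast
  ring

lemma sum_Icc_harmonicR (m : ℕ) : ∑ i ∈ Icc 1 m, harmonicR i = (m + 1) * harmonicR m - m := by
  induction m with
  | zero => simp [harmonicR]
  | succ m ih =>
    rw [sum_Icc_succ_top (by omega), ih, harmonicR_succ]
    push_cast
    field_simp
    ring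

lemma min_div_mul_eq_one_div_max {K : Type*} [Field K] [LinearOrder K] [IsStrictOrderedRing K]
    {a b : K} (ha : 0 < a) (hb : 0 < b) : min a b / (a * b) = 1 / max a b := by
  rcases le_total a b with hab | hab
  · rw [min_eq_left hab, max_eq_right hab]
    field_simp
  · rw [min_eq_right hab, max_eq_left hab]
    field_simp

lemma sum_Icc_min_div_mul_self {i : ℕ} (hi : 0 < i) :
    ∑ j ∈ Icc 1 i, (min i j : ℝ) / (i * j) = 1 := by
  have hterm : ∀ j ∈ Icc 1 i, (min i j : ℝ) / (i * j) = 1 / i := fun j hj => by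
    obtain ⟨hj, hji⟩ := mem_Icc.mp hj
    rw [min_div_mul_eq_one_div_max (by positivity) (by positivity),
      max_eq_left (by exact_mod_cast hji)]
  rw [sum_congr rfl hterm, sum_const, Nat.card_Icc, Nat.add_sub_cancel, nsmul_eq_mul]
  field_simp

lemma sum_Icc_min_div_mul {i n : ℕ} (hi : 0 < i) (hin : i ≤ n) :
    ∑ j ∈ Icc 1 n, (min i j : ℝ) / (i * j) = 1 + harmonicR n - harmonicR i := by
  induction n, hin using Nat.le_induction with
  | base => rw [sum_Icc_min_div_mul_self hi]; ring
  | succ n hin ih =>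
    rw [sum_Icc_succ_top (by omega), ih, harmonicR_succ,
      min_div_mul_eq_one_div_max (by positivity) (by positivity),
      max_eq_right (by exact_mod_cast hin.trans n.le_succ)]
    push_cast
    ring

theorem double_sum_min_identity (m n : ℕ) (hmn : m ≤ n) :
    ∑ i ∈ Finset.Icc 1 m, ∑ j ∈ Finset.Icc 1 n, (min i j : ℝ) / (i * j)
      = 2 * m - (m + 1) * harmonicR m + m * harmonicR n := by
  calc ∑ i ∈ Icc 1 m, ∑ j ∈ Icc 1 n, (min i j : ℝ) / (i * j)
      = ∑ i ∈ Icc 1 m, (1 + harmonicR n - harmonicR i) :=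
        sum_congr rfl fun i hi =>
          sum_Icc_min_div_mul (mem_Icc.mp hi).1 ((mem_Icc.mp hi).2.trans hmn)
    _ = m + m * harmonicR n - ∑ i ∈ Icc 1 m, harmonicR i := by
        rw [sum_sub_distrib, sum_add_distrib]
        simp
    _ = 2 * m - (m + 1) * harmonicR m + m * harmonicR n := by
        rw [sum_Icc_harmonicR]
        ring
end

section
/- Given partitions α, β of n, there exists a bipartite graph with parts A, B such that the degree sequence on A is α and the degree sequence on B is β if and only if α ⪯ β', where β' is the conjugate of β and ⪯ is the dominance order. -/
open Finset SimpleGraph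

/-- The conjugate partition: `conjugate f i` is the number of parts of size at least `i + 1`. -/
noncomputable def conjugate (f : ℕ → ℕ) (i : ℕ) : ℕ :=
  Nat.card {j : ℕ | i + 1 ≤ f j}

/-!
A bipartite graph is the same as its biadjacency 0-1 matrix, whose row sums are the degrees on
the left and whose column sums are the degrees on the right.

Necessity is double counting: the first `i` rows contain at most `min i (β b)` ones in column `b`,
and `∑ b, min i (β b) = ∑ j < i, β' j`.

Sufficiency: the Ferrers diagram of `β` has row sums `β'` and column sums `β`. Moving a one from a
row to a strictly shorter row inside a single column keeps the column sums, and every partition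
`α ⪯ β'` of the same size is reached from `β'` by such moves through partitions `⪯ β'`: at the first
index `i` where `α` falls short of `β'`, and the first later index `j` where the partial sums
agree again, `α` is obtained by such a move from `α + eᵢ - eⱼ`, which is closer to `β'`.
-/

open scoped Classical

section UnitTransfer

variable {ι : Type*} [DecidableEq ι]

def unitTransfer (r : ι → ℕ) (i j k : ι) : ℕ :=
  if k = i then r i - 1 else if k = j then r j + 1 else r k

lemma unitTransfer_unitTransfer {r : ι → ℕ} {i j : ι} (hij : i ≠ j) (hj : 0 < r j) :
    unitTransfer (unitTransfer r j i) i j = r := by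
  ext k
  simp only [unitTransfer, if_neg hij, if_neg hij.symm]
  split_ifs <;> subst_vars <;> omega

lemma unitTransfer_comp {κ : Type*} [DecidableEq κ] {f : ι → κ}
    (hf : Function.Injective f) (r : κ → ℕ) (i j a : ι) :
    unitTransfer (r ∘ f) i j a = unitTransfer r (f i) (f j) (f a) := by
  simp [unitTransfer, hf.eq_iff]

end UnitTransfer

lemma sum_range_unitTransfer (r : ℕ → ℕ) {i j : ℕ} (hij : i < j) (hj : 0 < r j) (m : ℕ) :
    ∑ k ∈ range m, unitTransfer r j i k = ∑ k ∈ range m, r k + if i < m ∧ m ≤ j then 1 else 0 := by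
  induction m with
  | zero => simp
  | succ m ih =>
    rw [sum_range_succ, sum_range_succ, ih, unitTransfer]
    split_ifs <;> subst_vars <;> omega

lemma antitone_unitTransfer {r : ℕ → ℕ} (hr : Antitone r) {i j : ℕ} (hij : i < j)
    (hi : ∀ k, k + 1 = i → r i < r k) (hj : r (j + 1) < r j) :
    Antitone (unitTransfer r j i) := by
  refine antitone_nat_of_succ_le fun m => ?_
  have hm : r (m + 1) ≤ r m := hr (Nat.le_succ m)
  have hj' := hr hij.le
  have hi' := hi m
  simp only [unitTransfer]
  split_ifs <;> subst_vars <;> omega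

lemma exists_first_deficit {n : ℕ} {α γ : ℕ → ℕ} (hαn : ∀ m, n ≤ m → α m = 0)
    (hγn : ∀ m, n ≤ m → γ m = 0) (hdom : ∀ m, ∑ k ∈ range m, α k ≤ ∑ k ∈ range m, γ k)
    (hne : α ≠ γ) : ∃ i < n, α i < γ i ∧ ∀ k < i, α k = γ k := by
  have hex : ∃ k, α k ≠ γ k := Function.ne_iff.mp hne
  obtain ⟨i, hi, hagree⟩ : ∃ i, α i ≠ γ i ∧ ∀ k < i, α k = γ k :=
    ⟨Nat.find hex, Nat.find_spec hex, fun k hk => not_not.mp (Nat.find_min hex hk)⟩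
  have hSi : ∑ k ∈ range i, α k = ∑ k ∈ range i, γ k :=
    sum_congr rfl fun k hk => hagree k (mem_range.mp hk)
  refine ⟨i, ?_, ?_, hagree⟩
  · by_contra h
    exact hi (by rw [hαn i (by omega), hγn i (by omega)])
  · have := hdom (i + 1)
    rw [sum_range_succ, sum_range_succ] at this
    omega

lemma exists_unitTransfer_dominated {n : ℕ} {α γ : ℕ → ℕ} (hα : Antitone α) (hγ : Antitone γ)
    (hαn : ∀ m, n ≤ m → α m = 0) (hγn : ∀ m, n ≤ m → γ m = 0)
    (htot : ∑ k ∈ range n, α k = ∑ k ∈ range n, γ k)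
    (hdom : ∀ m, ∑ k ∈ range m, α k ≤ ∑ k ∈ range m, γ k) (hne : α ≠ γ) :
    ∃ i j, i < j ∧ j < n ∧ 0 < α j ∧ Antitone (unitTransfer α j i) ∧
      ∀ m, ∑ k ∈ range m, unitTransfer α j i k ≤ ∑ k ∈ range m, γ k := by
  obtain ⟨i, hin, hαi, hagree⟩ := exists_first_deficit hαn hγn hdom hne
  have hSi : ∑ k ∈ range i, α k = ∑ k ∈ range i, γ k :=
    sum_congr rfl fun k hk => hagree k (mem_range.mp hk)
  -- the first index after `i` at which the partial sums of `α` catch up with those of `γ`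
  have hexj : ∃ j, i < j ∧ ∑ k ∈ range (j + 1), α k = ∑ k ∈ range (j + 1), γ k :=
    ⟨n, hin, by rw [sum_range_succ, sum_range_succ, hαn n le_rfl, hγn n le_rfl, htot]⟩
  obtain ⟨j, ⟨hij, hSj⟩, hjmin⟩ :
      ∃ j, (i < j ∧ ∑ k ∈ range (j + 1), α k = ∑ k ∈ range (j + 1), γ k) ∧
        ∀ m < j, ¬ (i < m ∧ ∑ k ∈ range (m + 1), α k = ∑ k ∈ range (m + 1), γ k) :=
    ⟨Nat.find hexj, Nat.find_spec hexj, fun m hm => Nat.find_min hexj hm⟩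
  have hlt : ∀ m, i < m → m ≤ j → ∑ k ∈ range m, α k < ∑ k ∈ range m, γ k := by
    intro m him hmj
    obtain ⟨m, rfl⟩ := Nat.exists_eq_add_of_lt him
    rcases Nat.eq_zero_or_pos m with rfl | hm
    · rw [sum_range_succ, sum_range_succ]
      omega
    · have hjm := hjmin (i + m) (by omega)
      have hle := hdom (i + m + 1)
      simp only [not_and] at hjm
      omega
  have hγj : γ j < α j := by
    have := hlt j hij le_rfl
    rw [sum_range_succ, sum_range_succ] at hSj
    omega
  have hαj : α (j + 1) < α j := by
    have := hdom (j + 2)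
    rw [sum_range_succ _ (j + 1), hSj, sum_range_succ γ (j + 1)] at this
    have : γ (j + 1) ≤ γ j := hγ (by omega)
    omega
  refine ⟨i, j, hij, ?_, by omega, antitone_unitTransfer hα hij ?_ hαj, fun m => ?_⟩
  · by_contra h
    rw [hαn j (by omega)] at hγj
    omega
  · intro k hk
    rw [hagree k (by omega)]
    exact hαi.trans_le (hγ (by omega))
  · rw [sum_range_unitTransfer α hij (by omega)]
    split_ifs with h
    · exact hlt m h.1 h.2
    · simpa using hdom m

theorem dominated_induction {n : ℕ} {γ : ℕ → ℕ} {P : (ℕ → ℕ) → Prop}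
    (hP : ∀ r i j, i < n → j < n → r j < r i → P r → P (unitTransfer r i j))
    (hγ : Antitone γ) (hγn : ∀ m, n ≤ m → γ m = 0) (hPγ : P γ)
    {α : ℕ → ℕ} (hα : Antitone α) (hαn : ∀ m, n ≤ m → α m = 0)
    (htot : ∑ k ∈ range n, α k = ∑ k ∈ range n, γ k)
    (hdom : ∀ m, ∑ k ∈ range m, α k ≤ ∑ k ∈ range m, γ k) : P α := by
  induction α using (measure fun α : ℕ → ℕ =>
      ∑ m ∈ range (n + 1), (∑ k ∈ range m, γ k - ∑ k ∈ range m, α k)).wf.induction with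
  | h α ih =>
  by_cases hαγ : α = γ
  · exact hαγ ▸ hPγ
  obtain ⟨i, j, hij, hjn, hαj, hα', hdom'⟩ :=
    exists_unitTransfer_dominated hα hγ hαn hγn htot hdom hαγ
  have hsum := sum_range_unitTransfer α hij hαj
  have hμ : ∑ m ∈ range (n + 1), (∑ k ∈ range m, γ k - ∑ k ∈ range m, unitTransfer α j i k) <
      ∑ m ∈ range (n + 1), (∑ k ∈ range m, γ k - ∑ k ∈ range m, α k) := by
    refine sum_lt_sum (fun m _ => ?_) ⟨j, mem_range.mpr (by omega), ?_⟩
    · have := hdom' m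
      have := hsum m
      omega
    · have := hdom' j
      have := hsum j
      simp only [hij, le_rfl, and_self, if_true] at this
      omega
  have hP' : P (unitTransfer α j i) := by
    refine ih _ hμ hα' (fun m hm => ?_) ?_ hdom'
    · simp [unitTransfer, hαn m hm, show m ≠ i by omega, show m ≠ j by omega]
    · rw [hsum n, if_neg (by omega), add_zero, htot]
  rw [← unitTransfer_unitTransfer hij.ne hαj]
  refine hP _ i j (by omega) hjn ?_ hP'
  simp only [unitTransfer, if_neg hij.ne, ↓reduceIte]
  have := hα hij.le
  omega

section Bigraphic

variable {ι κ : Type*} [Fintype ι] [Fintype κ]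

def IsBigraphic (r : ι → ℕ) (c : κ → ℕ) : Prop :=
  ∃ R : ι → κ → Prop, (∀ a, #{b | R a b} = r a) ∧ ∀ b, #{a | R a b} = c b

lemma card_filter_comp_equiv (p : ι → Prop) (σ : Equiv.Perm ι) :
    #{a | p (σ a)} = #{a | p a} := by
  simp only [card_filter]
  exact Equiv.sum_comp σ fun a => if p a then 1 else 0

-- Moving a unit from row `i` to a shorter row `j` along a column `b` that meets row `i`
-- but not row `j`: the new column `b` is the old one permuted by `swap i j`.
lemma IsBigraphic.unitTransfer [DecidableEq ι] {r : ι → ℕ} {c : κ → ℕ} (h : IsBigraphic r c)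
    {i j : ι} (hij : r j < r i) : IsBigraphic (unitTransfer r i j) c := by
  obtain ⟨R, hrow, hcol⟩ := h
  obtain ⟨b, hbi, hbj⟩ : ∃ b, R i b ∧ ¬ R j b := by
    simpa using exists_mem_notMem_of_card_lt_card (s := {b | R j b}) (t := {b | R i b})
      (by rw [hrow, hrow]; exact hij)
  have hne : i ≠ j := by rintro rfl; exact hbj hbi
  let R' a b' := R (if b' = b then Equiv.swap i j a else a) b'
  have hrow_i : ({b' | R' i b'} : Finset κ) = ({b' | R i b'} : Finset κ).erase b := by
    ext b'; by_cases hb' : b' = b <;> simp [R', hb', hbj]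
  have hrow_j : ({b' | R' j b'} : Finset κ) = insert b ({b' | R j b'} : Finset κ) := by
    ext b'; by_cases hb' : b' = b <;> simp [R', hb', hbi]
  refine ⟨R', fun a => ?_, fun b' => ?_⟩
  · by_cases hai : a = i
    · rw [hai, hrow_i, card_erase_of_mem (by simpa using hbi), hrow]
      simp [_root_.unitTransfer]
    by_cases haj : a = j
    · rw [haj, hrow_j, card_insert_of_notMem (by simpa using hbj), hrow]
      simp [_root_.unitTransfer, hne.symm]
    · simp [R', Equiv.swap_apply_of_ne_of_ne hai haj, hrow, _root_.unitTransfer, hai, haj]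
  · by_cases hb' : b' = b
    · subst hb'
      simpa [R', hcol] using card_filter_comp_equiv (R · b') (Equiv.swap i j)
    · simp [R', hb', hcol]

lemma IsBigraphic.sum_le_sum_min {r : ι → ℕ} {c : κ → ℕ} (h : IsBigraphic r c) (s : Finset ι) :
    ∑ a ∈ s, r a ≤ ∑ b, min #s (c b) := by
  obtain ⟨R, hrow, hcol⟩ := h
  calc ∑ a ∈ s, r a = ∑ a ∈ s, #(univ.bipartiteAbove R a) := by simp [bipartiteAbove, hrow]
    _ = ∑ b, #(s.bipartiteBelow R b) := sum_card_bipartiteAbove_eq_sum_card_bipartiteBelow R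
    _ ≤ ∑ b, min #s (c b) := sum_le_sum fun b _ => le_min (card_filter_le _ _)
        (hcol b ▸ card_le_card (filter_subset_filter _ (subset_univ s)))

end Bigraphic

section Conjugate

variable {n : ℕ} {β : ℕ → ℕ}

lemma conjugate_eq_card (hβ : ∀ m, n ≤ m → β m = 0) (i : ℕ) :
    conjugate β i = #{b ∈ range n | i < β b} := by
  have hset : {j | i + 1 ≤ β j} = ↑({b ∈ range n | i < β b} : Finset ℕ) := by
    ext j
    simp only [Set.mem_ofPred_eq, coe_filter, mem_range]
    refine ⟨fun hj => ⟨?_, hj⟩, And.right⟩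
    by_contra h
    rw [hβ j (by omega)] at hj
    omega
  rw [conjugate, hset, Nat.card_coe_set_eq, Set.ncard_coe_finset]

lemma antitone_conjugate (hβ : ∀ m, n ≤ m → β m = 0) : Antitone (conjugate β) := by
  intro i i' hii'
  simp only [conjugate_eq_card hβ]
  exact card_le_card fun b hb => by simp only [mem_filter, mem_range] at hb ⊢; omega

lemma conjugate_eq_zero (hβ : ∀ m, n ≤ m → β m = 0) (hβn : ∀ m, β m ≤ n) {i : ℕ} (hi : n ≤ i) :
    conjugate β i = 0 := by
  rw [conjugate_eq_card hβ, card_eq_zero, filter_eq_empty_iff]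
  exact fun b _ => by have := hβn b; omega

lemma sum_range_conjugate (hβ : ∀ m, n ≤ m → β m = 0) (i : ℕ) :
    ∑ j ∈ range i, conjugate β j = ∑ b ∈ range n, min i (β b) := by
  rw [sum_congr rfl fun j _ => conjugate_eq_card hβ j]
  refine (sum_card_bipartiteAbove_eq_sum_card_bipartiteBelow (fun j b => j < β b)).trans
    (sum_congr rfl fun b _ => ?_)
  rw [bipartiteBelow, ← card_range (min i (β b))]
  congr 1
  ext j
  simp only [mem_filter, mem_range]
  omega

lemma card_filter_fin_eq_card_filter_range (p : ℕ → Prop) [DecidablePred p] :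
    #{a : Fin n | p a} = #{j ∈ range n | p j} := by
  simp only [card_filter]
  exact Fin.sum_univ_eq_sum_range (fun j => if p j then 1 else 0) n

-- The Ferrers diagram of `β`, read by rows, has column sums `β` and row sums `conjugate β`.
lemma isBigraphic_conjugate (hβ : ∀ m, n ≤ m → β m = 0) (hβn : ∀ m, β m ≤ n) :
    IsBigraphic (fun a : Fin n => conjugate β a) (fun b : Fin n => β b) := by
  refine ⟨fun a b => (a : ℕ) < β b, fun a => ?_, fun b => ?_⟩
  · dsimp only
    rw [conjugate_eq_card hβ]
    convert card_filter_fin_eq_card_filter_range (fun j => (a : ℕ) < β j)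
  · dsimp only
    convert Fin.card_filter_val_lt.trans (min_eq_right (hβn b))

end Conjugate

lemma sum_range_eq_sum_filter_fin {n : ℕ} {α : ℕ → ℕ} (hα : ∀ m, n ≤ m → α m = 0) (i : ℕ) :
    ∑ j ∈ range i, α j = ∑ a ∈ ({a : Fin n | (a : ℕ) < i} : Finset (Fin n)), α a := by
  rw [sum_filter, Fin.sum_univ_eq_sum_range (fun j => if j < i then α j else 0), ← sum_filter,
    ← sum_filter_of_ne (p := (· < n)) fun j _ hj => by by_contra h; exact hj (hα j (by omega))]
  congr 1
  ext j
  simp only [mem_filter, mem_range]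
  omega

section Graph

variable {ι κ : Type*} [Fintype ι] [Fintype κ]

lemma degree_inl_eq_card (G : SimpleGraph (ι ⊕ κ)) (h : ∀ a a', ¬ G.Adj (.inl a) (.inl a'))
    (a : ι) : G.degree (.inl a) = #{b | G.Adj (.inl a) (.inr b)} := by
  rw [← card_neighborFinset_eq_degree, neighborFinset_eq_filter, card_filter, card_filter,
    Fintype.sum_sum_type]
  simp [h]

lemma degree_inr_eq_card (G : SimpleGraph (ι ⊕ κ)) (h : ∀ b b', ¬ G.Adj (.inr b) (.inr b'))
    (b : κ) : G.degree (.inr b) = #{a | G.Adj (.inl a) (.inr b)} := by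
  rw [← card_neighborFinset_eq_degree, neighborFinset_eq_filter, card_filter, card_filter,
    Fintype.sum_sum_type]
  simp [h, G.adj_comm (.inr b)]

theorem exists_bipartite_degrees_iff (r : ι → ℕ) (c : κ → ℕ) :
    (∃ G : SimpleGraph (ι ⊕ κ),
      ((∀ a a', ¬ G.Adj (.inl a) (.inl a')) ∧ ∀ b b', ¬ G.Adj (.inr b) (.inr b')) ∧
      (∀ a, G.degree (.inl a) = r a) ∧ ∀ b, G.degree (.inr b) = c b) ↔ IsBigraphic r c := by
  constructor
  · rintro ⟨G, ⟨hl, hr⟩, hdl, hdr⟩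
    exact ⟨fun a b => G.Adj (.inl a) (.inr b), fun a => degree_inl_eq_card G hl a ▸ hdl a,
      fun b => degree_inr_eq_card G hr b ▸ hdr b⟩
  · rintro ⟨R, hrow, hcol⟩
    let G := fromRel fun (u v : ι ⊕ κ) => ∃ a b, u = .inl a ∧ v = .inr b ∧ R a b
    have hl : ∀ a a', ¬ G.Adj (.inl a) (.inl a') := by simp [G]
    have hr : ∀ b b', ¬ G.Adj (.inr b) (.inr b') := by simp [G]
    have hlr : ∀ a b, G.Adj (.inl a) (.inr b) ↔ R a b := by simp [G]
    refine ⟨G, ⟨hl, hr⟩, fun a => ?_, fun b => ?_⟩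
    · simp only [degree_inl_eq_card G hl, hlr, hrow]
    · simp only [degree_inr_eq_card G hr, hlr, hcol]

end Graph

lemma IsBigraphic.sum_range_le_sum_range_conjugate {n : ℕ} {α β : ℕ → ℕ}
    (h : IsBigraphic (fun a : Fin n => α a) (fun b : Fin n => β b))
    (hα : ∀ m, n ≤ m → α m = 0) (hβ : ∀ m, n ≤ m → β m = 0) (i : ℕ) :
    ∑ j ∈ range i, α j ≤ ∑ j ∈ range i, conjugate β j :=
  calc ∑ j ∈ range i, α j = ∑ a ∈ ({a : Fin n | (a : ℕ) < i} : Finset (Fin n)), α a :=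
        sum_range_eq_sum_filter_fin hα i
    _ ≤ ∑ b : Fin n, min #{a : Fin n | (a : ℕ) < i} (β b) := h.sum_le_sum_min _
    _ ≤ ∑ b : Fin n, min i (β b) := sum_le_sum fun b _ =>
        min_le_min_right _ (Fin.card_filter_val_lt.trans_le (min_le_right n i))
    _ = ∑ j ∈ range i, conjugate β j := by
        rw [Fin.sum_univ_eq_sum_range (fun b => min i (β b)), sum_range_conjugate hβ]

lemma isBigraphic_of_dominated {n : ℕ} {α β : ℕ → ℕ} (hα_anti : Antitone α)
    (hα : ∀ m, n ≤ m → α m = 0) (hβ : ∀ m, n ≤ m → β m = 0) (hβn : ∀ m, β m ≤ n)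
    (htot : ∑ j ∈ range n, α j = ∑ j ∈ range n, β j)
    (hdom : ∀ i, ∑ j ∈ range i, α j ≤ ∑ j ∈ range i, conjugate β j) :
    IsBigraphic (fun a : Fin n => α a) (fun b : Fin n => β b) := by
  refine dominated_induction (P := fun r => IsBigraphic (r ∘ Fin.val) (fun b : Fin n => β b))
    (fun r i j hi hj hr h => ?_) (antitone_conjugate hβ) (fun m => conjugate_eq_zero hβ hβn)
    (isBigraphic_conjugate hβ hβn) hα_anti hα ?_ hdom
  · convert h.unitTransfer (i := ⟨i, hi⟩) (j := ⟨j, hj⟩) hr using 1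
    funext a
    exact (unitTransfer_comp Fin.val_injective r ⟨i, hi⟩ ⟨j, hj⟩ a).symm
  · rw [htot, sum_range_conjugate hβ]
    exact sum_congr rfl fun b _ => (min_eq_right (hβn b)).symm

open scoped Classical in
theorem gale_ryser_general (n : ℕ) (α β : ℕ → ℕ)
    (hα_anti : Antitone α) (hα_sum : ∑ i ∈ Finset.range n, α i = n)
    (hα_supp : ∀ i, n ≤ i → α i = 0)
    (hβ_sum : ∑ i ∈ Finset.range n, β i = n)
    (hβ_supp : ∀ i, n ≤ i → β i = 0) :
    (∃ G : SimpleGraph (Fin n ⊕ Fin n),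
      (∀ a b : Fin n, ¬ G.Adj (Sum.inl a) (Sum.inl b) ∧ ¬ G.Adj (Sum.inr a) (Sum.inr b)) ∧
      (∀ i : Fin n, G.degree (Sum.inl i) = α i) ∧
      (∀ i : Fin n, G.degree (Sum.inr i) = β i)) ↔
    (∀ i : ℕ, ∑ j ∈ Finset.range i, α j ≤ ∑ j ∈ Finset.range i, conjugate β j) := by
  have hβn : ∀ m, β m ≤ n := fun m => by
    by_cases hm : m < n
    · exact hβ_sum ▸ single_le_sum (fun j _ => Nat.zero_le (β j)) (mem_range.mpr hm)
    · simp [hβ_supp m (by omega)]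
  simp only [forall_and]
  rw [exists_bipartite_degrees_iff]
  exact ⟨fun h => h.sum_range_le_sum_range_conjugate hα_supp hβ_supp,
    isBigraphic_of_dominated hα_anti hα_supp hβ_supp hβn (hα_sum.trans hβ_sum.symm)⟩

open scoped Classical in
theorem gale_ryser (n : ℕ) (α β : ℕ → ℕ)
    (hα_anti : Antitone α) (hα_sum : ∑ i ∈ Finset.range n, α i = n)
    (hα_supp : ∀ i, n ≤ i → α i = 0)
    (hβ_anti : Antitone β) (hβ_sum : ∑ i ∈ Finset.range n, β i = n)
    (hβ_supp : ∀ i, n ≤ i → β i = 0) :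
    (∃ G : SimpleGraph (Fin n ⊕ Fin n),
      (∀ a b : Fin n, ¬ G.Adj (Sum.inl a) (Sum.inl b) ∧ ¬ G.Adj (Sum.inr a) (Sum.inr b)) ∧
      (∀ i : Fin n, G.degree (Sum.inl i) = α i) ∧
      (∀ i : Fin n, G.degree (Sum.inr i) = β i)) ↔
    (∀ i : ℕ, ∑ j ∈ Finset.range i, α j ≤ ∑ j ∈ Finset.range i, conjugate β j) :=
  gale_ryser_general n α β hα_anti hα_sum hα_supp hβ_sum hβ_supp
end

section
/- Define g(ρ) = 1 + 2( ρ^{-1/2}/(1-ρ^{-1/2}) + (log ρ / 2)·ρ^{-1/2}/(1-ρ^{-1/2})^2 ) for ρ > 1. Then g is continuous and strictly decreasing on (1, ∞) with limit 1 as ρ → ∞, and there exists a unique ρ_* > 1 with g(ρ_*) = 5/4; moreover 1528 < ρ_* < 1529. -/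
open Real

/-- The function `g(ρ)` bounding the sum of absolute correlations. -/
noncomputable def gCorr (ρ : ℝ) : ℝ :=
  1 + 2 * (ρ ^ (-(1 : ℝ) / 2) / (1 - ρ ^ (-(1 : ℝ) / 2)) +
    (Real.log ρ / 2) * ρ ^ (-(1 : ℝ) / 2) / (1 - ρ ^ (-(1 : ℝ) / 2)) ^ 2)

open Filter Set Topology

/-!
Substituting `t = ρ^(-1/2) ∈ (0, 1)` turns `g` into `h(t) = 1 + 2 (t/(1-t) - t log t/(1-t)^2)`,
with `h'(t) = -2 (1 + t) log t / (1 - t)^3 > 0`. Since `t` decreases in `ρ`, `g` is strictly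
decreasing, and `g(ρ) → h(0) = 1` because `t log t → 0`. The bracket `1528 < ρ_* < 1529`
follows from `g(1528) > 5/4 > g(1529)`, which needs `√ρ` and `log ρ` to about five digits:
`g` is increasing in both `ρ^(-1/2)` and `log ρ`, so rational bounds on these suffice, and
`p/q < log x` reduces to the integer inequality `e^p < x^q` via the 9-digit bounds on `e`.
-/

/-- `gCorr ρ = corrBound (ρ ^ (-1/2)) (log ρ / 2)` holds by `rfl`. -/
noncomputable def corrBound (t L : ℝ) : ℝ :=
  1 + 2 * (t / (1 - t) + L * t / (1 - t) ^ 2)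

lemma corrBound_le_corrBound {a t l L : ℝ} (ha : 0 ≤ a) (hat : a ≤ t) (ht : t < 1)
    (hl : 0 ≤ l) (hlL : l ≤ L) : corrBound a l ≤ corrBound t L := by
  have h1t : 0 < 1 - t := by linarith
  have h1a : 0 < 1 - a := by linarith
  have hfrac : a / (1 - a) ≤ t / (1 - t) := by
    rw [div_le_div_iff₀ h1a h1t]; nlinarith
  have hfrac2 : a / (1 - a) ^ 2 ≤ t / (1 - t) ^ 2 := by
    rw [div_le_div_iff₀ (by positivity) (by positivity)]
    nlinarith [mul_nonneg (sub_nonneg.mpr hat) (by nlinarith : (0:ℝ) ≤ 1 - a * t)]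
  have hlog : l * a / (1 - a) ^ 2 ≤ L * t / (1 - t) ^ 2 := by
    rw [mul_div_assoc, mul_div_assoc]
    exact mul_le_mul hlL hfrac2 (by positivity) (hl.trans hlL)
  unfold corrBound
  linarith

lemma hasDerivAt_corrBound_neg_log {t : ℝ} (ht : 0 < t) (ht1 : t ≠ 1) :
    HasDerivAt (fun t => corrBound t (-log t)) (-2 * (1 + t) * log t / (1 - t) ^ 3) t := by
  have h1t : 1 - t ≠ 0 := sub_ne_zero.mpr ht1.symm
  have hfrac : HasDerivAt (fun s : ℝ => s / (1 - s)) ((1 * (1 - t) - t * -1) / (1 - t) ^ 2) t :=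
    (hasDerivAt_id t).div ((hasDerivAt_id t).const_sub 1) h1t
  have hnum : HasDerivAt (fun s => -log s * s) (-t⁻¹ * t + -log t * 1) t :=
    (hasDerivAt_log ht.ne').neg.mul (hasDerivAt_id t)
  have hden : HasDerivAt (fun s : ℝ => (1 - s) ^ 2) (2 * (1 - t) * -1) t := by
    simpa using ((hasDerivAt_id t).const_sub 1).fun_pow 2
  have h : HasDerivAt (fun s => corrBound s (-log s)) _ t :=
    ((hfrac.add (hnum.div hden (pow_ne_zero 2 h1t))).const_mul 2).const_add 1
  convert h using 1
  field_simp
  ring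

lemma strictMonoOn_corrBound_neg_log : StrictMonoOn (fun t => corrBound t (-log t)) (Ioo 0 1) := by
  refine strictMonoOn_of_deriv_pos (convex_Ioo 0 1) (fun t ht => ?_) (fun t ht => ?_)
  · exact (hasDerivAt_corrBound_neg_log ht.1 ht.2.ne).continuousAt.continuousWithinAt
  · rw [interior_Ioo] at ht
    rw [(hasDerivAt_corrBound_neg_log ht.1 ht.2.ne).deriv]
    have hlog : log t < 0 := log_neg ht.1 ht.2
    have h1t : 0 < 1 - t := sub_pos.mpr ht.2
    have h1 : 0 < 1 + t := by linarith [ht.1]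
    exact div_pos (by nlinarith [mul_pos h1 (neg_pos.mpr hlog)]) (by positivity)

lemma continuousOn_corrBound_neg_log :
    ContinuousOn (fun t => corrBound t (-log t)) (Iio 1) := by
  have h : ∀ t ∈ Iio (1:ℝ), 1 - t ≠ 0 := fun t ht => (sub_pos.2 ht).ne'
  have hsub : ContinuousOn (fun t : ℝ => 1 - t) (Iio 1) := continuousOn_const.sub continuousOn_id
  have heq : (fun t => corrBound t (-log t)) =
      fun t => 1 + 2 * (t / (1 - t) + negMulLog t / (1 - t) ^ 2) := by
    ext t; simp only [corrBound, negMulLog]; ring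
  rw [heq]
  exact continuousOn_const.add (continuousOn_const.mul ((continuousOn_id.div hsub h).add
    (continuous_negMulLog.continuousOn.div (hsub.pow 2) fun t ht => pow_ne_zero 2 (h t ht))))

lemma rpow_neg_half_mem_Ioo {ρ : ℝ} (hρ : 1 < ρ) : ρ ^ (-(1:ℝ) / 2) ∈ Ioo 0 1 :=
  ⟨rpow_pos_of_pos (by linarith) _, rpow_lt_one_of_one_lt_of_neg hρ (by norm_num)⟩

lemma gCorr_eq_corrBound_neg_log {ρ : ℝ} (hρ : 0 < ρ) :
    gCorr ρ = corrBound (ρ ^ (-(1:ℝ) / 2)) (-log (ρ ^ (-(1:ℝ) / 2))) := by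
  rw [log_rpow hρ]
  simp only [gCorr, corrBound]
  ring

lemma continuousOn_gCorr : ContinuousOn gCorr (Ioi 1) := by
  have hrpow : ContinuousOn (fun ρ : ℝ => ρ ^ (-(1:ℝ) / 2)) (Ioi 1) := fun ρ hρ =>
    (continuousAt_rpow_const ρ _ (Or.inl (by linarith [mem_Ioi.mp hρ]))).continuousWithinAt
  refine (continuousOn_corrBound_neg_log.comp hrpow fun ρ hρ => ?_).congr fun ρ hρ => ?_
  · exact (rpow_neg_half_mem_Ioo hρ).2
  · exact gCorr_eq_corrBound_neg_log (by linarith [mem_Ioi.mp hρ])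

lemma strictAntiOn_gCorr : StrictAntiOn gCorr (Ioi 1) := by
  have hrpow := (strictAntiOn_rpow_Ioi_of_exponent_neg (by norm_num : -(1:ℝ) / 2 < 0)).mono
    (Ioi_subset_Ioi zero_le_one)
  refine (strictMonoOn_corrBound_neg_log.comp_strictAntiOn hrpow
    fun ρ hρ => rpow_neg_half_mem_Ioo hρ).congr fun ρ hρ => ?_
  exact (gCorr_eq_corrBound_neg_log (by linarith [mem_Ioi.mp hρ])).symm

lemma tendsto_gCorr_atTop : Tendsto gCorr atTop (𝓝 1) := by
  have hrpow : Tendsto (fun ρ : ℝ => ρ ^ (-(1:ℝ) / 2)) atTop (𝓝 0) := by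
    simpa [neg_div] using tendsto_rpow_neg_atTop (by norm_num : (0:ℝ) < 1 / 2)
  have hcont : ContinuousAt (fun t => corrBound t (-log t)) 0 :=
    continuousOn_corrBound_neg_log.continuousAt (Iio_mem_nhds one_pos)
  have h := hcont.tendsto.comp hrpow
  simp only [corrBound, log_zero, neg_zero, zero_div, add_zero, mul_zero] at h
  refine h.congr' ?_
  filter_upwards [eventually_gt_atTop 0] with ρ hρ
  exact (gCorr_eq_corrBound_neg_log hρ).symm

lemma lt_log_of_pow_lt {x d : ℝ} {p q : ℕ} (hq : q ≠ 0) (hx : 0 < x) (hd : exp 1 ≤ d)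
    (h : d ^ p < x ^ q) : (p / q : ℝ) < log x := by
  rw [lt_log_iff_exp_lt hx]
  refine lt_of_pow_lt_pow_left₀ q hx.le ?_
  calc exp (p / q) ^ q = exp 1 ^ p := by rw [← exp_nat_mul, ← exp_nat_mul]; field_simp
    _ ≤ d ^ p := pow_le_pow_left₀ (exp_pos 1).le hd p
    _ < x ^ q := h

lemma log_lt_of_lt_pow {x d : ℝ} {p q : ℕ} (hq : q ≠ 0) (hx : 0 < x) (hd0 : 0 ≤ d)
    (hd : d ≤ exp 1) (h : x ^ q < d ^ p) : log x < p / q := by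
  rw [log_lt_iff_lt_exp hx]
  refine lt_of_pow_lt_pow_left₀ q (exp_pos _).le ?_
  calc x ^ q < d ^ p := h
    _ ≤ exp 1 ^ p := pow_le_pow_left₀ hd0 hd p
    _ = exp (p / q) ^ q := by rw [← exp_nat_mul, ← exp_nat_mul]; field_simp

lemma log_1528_gt : (777 / 106 : ℝ) < log 1528 := by
  have h : (27183 / 10000 : ℝ) ^ 777 < 1528 ^ 106 := by
    rw [div_pow, div_lt_iff₀ (by positivity)]
    exact_mod_cast (by decide +kernel : (27183:ℕ) ^ 777 < 1528 ^ 106 * 10000 ^ 777)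
  exact_mod_cast lt_log_of_pow_lt (by norm_num) (by norm_num)
    (exp_one_lt_d9.le.trans (by norm_num)) h

lemma log_1529_lt : log 1529 < 2581 / 352 := by
  have h : (1529 : ℝ) ^ 352 < (271828 / 100000) ^ 2581 := by
    rw [div_pow, lt_div_iff₀ (by positivity)]
    exact_mod_cast (by decide +kernel : (1529:ℕ) ^ 352 * 100000 ^ 2581 < 271828 ^ 2581)
  exact_mod_cast log_lt_of_lt_pow (by norm_num) (by norm_num) (by norm_num)
    ((by norm_num : (271828 / 100000 : ℝ) ≤ 2.7182818283).trans exp_one_gt_d9.le) h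

lemma rpow_neg_half_eq_inv_sqrt {ρ : ℝ} (hρ : 0 ≤ ρ) : ρ ^ (-(1:ℝ) / 2) = (√ρ)⁻¹ := by
  rw [neg_div, rpow_neg hρ, sqrt_eq_rpow, one_div]

lemma five_fourths_lt_gCorr_1528 : 5 / 4 < gCorr 1528 := by
  have ht : (100 / 3909 : ℝ) ≤ 1528 ^ (-(1:ℝ) / 2) := by
    rw [rpow_neg_half_eq_inv_sqrt (by norm_num), ← inv_div]
    exact inv_anti₀ (by positivity) ((sqrt_le_left (by norm_num)).mpr (by norm_num))
  have hbound := corrBound_le_corrBound (by norm_num) ht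
    (rpow_neg_half_mem_Ioo (by norm_num)).2 (by norm_num)
    (by linarith [log_1528_gt] : (777 / 212 : ℝ) ≤ log 1528 / 2)
  refine lt_of_lt_of_le ?_ hbound
  norm_num [corrBound]

lemma gCorr_1529_lt_five_fourths : gCorr 1529 < 5 / 4 := by
  have ht : (1529 : ℝ) ^ (-(1:ℝ) / 2) ≤ 10 / 391 := by
    rw [rpow_neg_half_eq_inv_sqrt (by norm_num), ← inv_div]
    exact inv_anti₀ (by positivity) ((le_sqrt' (by norm_num)).mpr (by norm_num))
  have hbound := corrBound_le_corrBound (rpow_neg_half_mem_Ioo (by norm_num)).1.le ht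
    (by norm_num) (by positivity) (by linarith [log_1529_lt] : log 1529 / 2 ≤ 2581 / 704)
  refine lt_of_le_of_lt hbound ?_
  norm_num [corrBound]

lemma existsUnique_eq_of_strictAntiOn {f : ℝ → ℝ} {s : Set ℝ} {a b c : ℝ}
    (hs : s.OrdConnected) (hf : ContinuousOn f s) (hanti : StrictAntiOn f s) (ha : a ∈ s)
    (hb : b ∈ s) (hab : a ≤ b) (hfa : c ≤ f a) (hfb : f b ≤ c) : ∃! x, x ∈ s ∧ f x = c := by
  obtain ⟨x, hx, hfx⟩ := intermediate_value_Icc' hab (hf.mono (hs.out ha hb)) ⟨hfb, hfa⟩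
  have hxs : x ∈ s := hs.out ha hb hx
  exact ⟨x, ⟨hxs, hfx⟩, fun y hy => hanti.injOn hy.1 hxs (hy.2.trans hfx.symm)⟩

theorem gCorr_properties :
    ContinuousOn gCorr (Set.Ioi 1) ∧
    StrictAntiOn gCorr (Set.Ioi 1) ∧
    Filter.Tendsto gCorr Filter.atTop (nhds 1) ∧
    (∃! ρ : ℝ, ρ ∈ Set.Ioi (1 : ℝ) ∧ gCorr ρ = 5 / 4) ∧
    (∀ ρ : ℝ, ρ ∈ Set.Ioi (1 : ℝ) → gCorr ρ = 5 / 4 → 1528 < ρ ∧ ρ < 1529) := by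
  have h1528 : (1528 : ℝ) ∈ Ioi 1 := by norm_num
  have h1529 : (1529 : ℝ) ∈ Ioi 1 := by norm_num
  refine ⟨continuousOn_gCorr, strictAntiOn_gCorr, tendsto_gCorr_atTop, ?_,
    fun ρ hρ hgρ => ⟨?_, ?_⟩⟩
  · exact existsUnique_eq_of_strictAntiOn ordConnected_Ioi continuousOn_gCorr strictAntiOn_gCorr
      h1528 h1529 (by norm_num) five_fourths_lt_gCorr_1528.le gCorr_1529_lt_five_fourths.le
  · exact (strictAntiOn_gCorr.lt_iff_gt hρ h1528).mp (hgρ ▸ five_fourths_lt_gCorr_1528)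
  · exact (strictAntiOn_gCorr.lt_iff_gt h1529 hρ).mp (hgρ ▸ gCorr_1529_lt_five_fourths)
end
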